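/- With θ defined by sin θ = √(σ²/(2P−δ+σ²)) and d_n = V_n(√(n(2P+2δ)))·sin^n θ, the rate R_n = (1/n)·log₂(V_n(√(nP))/(8 d_n)) satisfies liminf_{n→∞} R_n ≥ (1/2)·log₂(P/(2P+2δ) + ((2P−δ)/(2P+2δ))·(P/σ²)); consequently, for every ε > 0 one can choose δ > 0 small enough that R_n ≥ (1/2)·log₂(1/2 + P/σ²) − ε for all sufficiently large n. -/

import Mathlib

open Filter Real Topology

/-!
With `A = P/(2P+2δ) + ((2P-δ)/(2P+2δ))·(P/σ²)` and `sin² θ = σ²/(2P-δ+σ²)` one has exactly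
`nP = A · n(2P+2δ) · sin² θ`. Ball volumes scale as `V_n(cρ) = cⁿ V_n(ρ)`, so the ratio
`V_n(√(nP))/(8 d_n)` equals `(√A)ⁿ/8` and `R_n = ½ log₂ A - 3/n`, which tends to `½ log₂ A`.
At `δ = 0` the limit is `½ log₂(1/2 + P/σ²)`, and it is continuous in `δ` there.
-/

noncomputable section

def ballVolume (n : ℕ) (ρ : ℝ) : ℝ :=
  π ^ ((n : ℝ) / 2) * ρ ^ n / Gamma ((n : ℝ) / 2 + 1)

lemma ballVolume_mul (n : ℕ) (c ρ : ℝ) : ballVolume n (c * ρ) = c ^ n * ballVolume n ρ := by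
  simp only [ballVolume, mul_pow]
  ring

lemma ballVolume_ne_zero (n : ℕ) {ρ : ℝ} (hρ : ρ ≠ 0) : ballVolume n ρ ≠ 0 := by
  have hΓ : 0 < Gamma ((n : ℝ) / 2 + 1) := Gamma_pos_of_pos (by positivity)
  have hπ : 0 < π ^ ((n : ℝ) / 2) := rpow_pos_of_pos pi_pos _
  unfold ballVolume
  positivity

lemma sin_arcsin_sqrt {x : ℝ} (hx : x ≤ 1) : sin (arcsin √x) = √x :=
  sin_arcsin (by linarith [sqrt_nonneg x]) (sqrt_le_one.mpr hx)

def minAngleRate (P σ2 δ : ℝ) (n : ℕ) : ℝ :=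
  (1 / (n : ℝ)) * logb 2 (ballVolume n √((n : ℝ) * P) /
    (8 * (ballVolume n √((n : ℝ) * (2 * P + 2 * δ)) * sin (arcsin √(σ2 / (2 * P - δ + σ2))) ^ n)))

def minAngleRateArg (P σ2 δ : ℝ) : ℝ :=
  P / (2 * P + 2 * δ) + ((2 * P - δ) / (2 * P + 2 * δ)) * (P / σ2)

variable {P σ2 δ : ℝ}

lemma minAngleRateArg_zero (hP : P ≠ 0) : minAngleRateArg P σ2 0 = 1 / 2 + P / σ2 := by
  simp only [minAngleRateArg, mul_zero, add_zero, sub_zero, div_self (mul_ne_zero two_ne_zero hP)]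
  field_simp

lemma minAngleRateArg_pos (hP : 0 < P) (hσ : 0 < σ2) (hδ : -P < δ) (hδ' : δ ≤ 2 * P) :
    0 < minAngleRateArg P σ2 δ := by
  have h : 0 < 2 * P + 2 * δ := by linarith
  have h' : 0 ≤ 2 * P - δ := by linarith
  unfold minAngleRateArg
  positivity

lemma mul_eq_minAngleRateArg_mul (n : ℝ) (hσ : 0 < σ2) (hδ : 0 < 2 * P + 2 * δ)
    (hδ' : 0 < 2 * P - δ + σ2) :
    n * P = minAngleRateArg P σ2 δ * (σ2 / (2 * P - δ + σ2)) * (n * (2 * P + 2 * δ)) := by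
  have hA : minAngleRateArg P σ2 δ = P * (2 * P - δ + σ2) / ((2 * P + 2 * δ) * σ2) := by
    unfold minAngleRateArg
    field_simp
    ring
  have hPδ : 0 < P + δ := by linarith
  have hden : 0 < P * 2 - δ + σ2 := by linarith
  rw [hA]
  field_simp

lemma minAngleRate_eq (hP : 0 < P) (hσ : 0 < σ2) (hδ : -P < δ) (hδ' : δ ≤ 2 * P) {n : ℕ}
    (hn : 0 < n) :
    minAngleRate P σ2 δ n = (1 / 2) * logb 2 (minAngleRateArg P σ2 δ) - 3 / n := by
  set A := minAngleRateArg P σ2 δ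
  set s := √(σ2 / (2 * P - δ + σ2))
  set ρ := √((n : ℝ) * (2 * P + 2 * δ))
  have hA : 0 < A := minAngleRateArg_pos hP hσ hδ hδ'
  have hs : 0 < s := sqrt_pos.mpr (by apply div_pos <;> linarith)
  have hn' : (0 : ℝ) < n := by exact_mod_cast hn
  have hρ : 0 < ρ := sqrt_pos.mpr (mul_pos hn' (by linarith))
  have hradius : √((n : ℝ) * P) = √A * s * ρ := by
    rw [mul_eq_minAngleRateArg_mul (n : ℝ) hσ (by linarith : 0 < 2 * P + 2 * δ)
      (by linarith : 0 < 2 * P - δ + σ2), sqrt_mul (by positivity), sqrt_mul hA.le]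
  have hratio : ballVolume n √((n : ℝ) * P) / (8 * (ballVolume n ρ * s ^ n)) = √A ^ n / 8 := by
    have := ballVolume_ne_zero n hρ.ne'
    rw [hradius, ballVolume_mul, mul_pow]
    field_simp
  have hlog : logb 2 (√A ^ n / 8) = n * ((1 / 2) * logb 2 A) - 3 := by
    rw [logb_div (by positivity) (by norm_num), logb_pow,
      show (8 : ℝ) = 2 ^ (3 : ℕ) by norm_num, logb_pow, logb_self_eq_one (by norm_num),
      logb, logb, log_sqrt hA.le]
    ring
  rw [minAngleRate, sin_arcsin_sqrt (by rw [div_le_one (by linarith)]; linarith), hratio, hlog]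
  field_simp

lemma tendsto_minAngleRate (hP : 0 < P) (hσ : 0 < σ2) (hδ : -P < δ) (hδ' : δ ≤ 2 * P) :
    Tendsto (minAngleRate P σ2 δ) atTop (𝓝 ((1 / 2) * logb 2 (minAngleRateArg P σ2 δ))) := by
  have h := (tendsto_const_nhds (x := (1 / 2) * logb 2 (minAngleRateArg P σ2 δ))).sub
    (tendsto_const_div_atTop_nhds_zero_nat (3 : ℝ))
  rw [sub_zero] at h
  refine h.congr' ?_
  filter_upwards [eventually_gt_atTop 0] with n hn
  rw [minAngleRate_eq hP hσ hδ hδ' hn]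

lemma continuousAt_minAngleRateArg_zero (hP : P ≠ 0) :
    ContinuousAt (minAngleRateArg P σ2) 0 := by
  unfold minAngleRateArg
  fun_prop (disch := simpa using hP)

end

/-- With `θ(δ)` given by `sin θ = √(σ²/(2P−δ+σ²))` and
`d_n(δ) = V_n(√(n(2P+2δ)))·sinⁿθ(δ)`, the rate `R_n(δ) = (1/n)log₂(V_n(√(nP))/(8 d_n(δ)))`
satisfies `liminf_n R_n(δ) ≥ (1/2)log₂(P/(2P+2δ) + ((2P−δ)/(2P+2δ))·(P/σ²))`; consequently,
for every `ε > 0` there is `δ ∈ (0, 2P)` with `R_n(δ) ≥ (1/2)log₂(1/2 + P/σ²) − ε` for all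
sufficiently large `n`. -/
theorem min_angle_rate_bound (P σ2 : ℝ) (hP : 0 < P) (hσ : 0 < σ2)
    (Vn : ℕ → ℝ → ℝ)
    (hVn : ∀ (n : ℕ) (ρ : ℝ), Vn n ρ = Real.pi ^ ((n : ℝ)/2) * ρ ^ n / Real.Gamma ((n : ℝ)/2 + 1))
    (θ : ℝ → ℝ)
    (hθ : ∀ δ : ℝ, θ δ = Real.arcsin (Real.sqrt (σ2 / (2*P - δ + σ2))))
    (dn : ℝ → ℕ → ℝ)
    (hdn : ∀ (δ : ℝ) (n : ℕ),
      dn δ n = Vn n (Real.sqrt ((n : ℝ) * (2*P + 2*δ))) * Real.sin (θ δ) ^ n)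
    (R : ℝ → ℕ → ℝ)
    (hR : ∀ (δ : ℝ) (n : ℕ),
      R δ n = (1 / (n : ℝ)) * Real.logb 2 (Vn n (Real.sqrt ((n : ℝ) * P)) / (8 * dn δ n))) :
    (∀ δ : ℝ, 0 < δ → δ < 2*P →
      (1/2) * Real.logb 2 (P/(2*P + 2*δ) + ((2*P - δ)/(2*P + 2*δ)) * (P/σ2))
        ≤ Filter.liminf (fun n : ℕ => R δ n) atTop) ∧
    (∀ ε : ℝ, 0 < ε → ∃ δ : ℝ, 0 < δ ∧ δ < 2*P ∧
      ∀ᶠ n : ℕ in atTop, (1/2) * Real.logb 2 (1/2 + P/σ2) - ε ≤ R δ n) := by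
  have hR' : R = minAngleRate P σ2 := by
    funext δ n
    rw [hR, hdn, hθ, hVn, hVn]
    rfl
  subst hR'
  refine ⟨fun δ hδ hδ' => (tendsto_minAngleRate hP hσ (by linarith) hδ'.le).liminf_eq.ge,
    fun ε hε => ?_⟩
  have hlimit : ContinuousAt (fun δ => (1 / 2) * logb 2 (minAngleRateArg P σ2 δ)) 0 :=
    continuousAt_const.mul <|
      (continuousAt_logb (by rw [minAngleRateArg_zero hP.ne']; positivity)).comp
        (continuousAt_minAngleRateArg_zero hP.ne')
  have hclose : ∀ᶠ δ in 𝓝[>] 0, δ < 2 * P ∧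
      (1 / 2) * logb 2 (1 / 2 + P / σ2) - ε < (1 / 2) * logb 2 (minAngleRateArg P σ2 δ) := by
    refine nhdsWithin_le_nhds ((eventually_lt_nhds (by linarith)).and
      (continuousAt_const.eventually_lt hlimit ?_))
    simp only [minAngleRateArg_zero hP.ne']
    linarith
  obtain ⟨δ, hδ, hδ', hδε⟩ := (eventually_mem_nhdsWithin.and hclose).exists
  have hδP : -P < δ := by linarith [Set.mem_Ioi.mp hδ]
  exact ⟨δ, hδ, hδ', ((tendsto_minAngleRate hP hσ hδP hδ'.le).eventually_const_lt hδε).mono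
    fun _ hn => hn.le⟩
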